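/- Let q_1, q_2, β*, w_2 be positive real numbers, set w_1* = w_2/β*, x_1* = q_1/(1 + β*), x_2* = q_2 β*/(1 + β*), and let M be the 3×3 real matrix M = [[0, −w_1*, 0], [q_1 − x_1*, −(w_1* + w_2), 0], [−x_2*, 0, −(w_1* + w_2)]]. Then M has an eigenvalue with nonzero imaginary part if and only if 0 < w_2 < 4 q_1 (β*)²/(1 + β*)³. -/
import Mathlib

lemma quad_root_iff (a b : ℝ) :
    (∃ z : ℂ, z ^ 2 + (a : ℂ) * z + (b : ℂ) = 0 ∧ z.im ≠ 0) ↔ a ^ 2 < 4 * b := by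
  constructor
  · rintro ⟨z, hz, him⟩
    have hre := congrArg Complex.re hz
    have him' := congrArg Complex.im hz
    simp [pow_two, Complex.add_re, Complex.add_im, Complex.mul_re, Complex.mul_im] at hre him'
    have hy : z.im ≠ 0 := him
    have hx : 2 * z.re + a = 0 := by
      rcases mul_eq_zero.mp (show z.im * (2 * z.re + a) = 0 by ring_nf; ring_nf at him'; linarith) with h | h
      · exact absurd h hy
      · exact h
    nlinarith [sq_nonneg z.im, mul_self_pos.mpr hy, sq_nonneg (z.re)]
  · intro h
    have hge : (0:ℝ) ≤ b - a * a / 4 := by nlinarith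
    have hs : Real.sqrt (b - a * a / 4) * Real.sqrt (b - a * a / 4) = b - a * a / 4 :=
      Real.mul_self_sqrt hge
    refine ⟨⟨-a / 2, Real.sqrt (b - a * a / 4)⟩, ?_, ?_⟩
    · apply Complex.ext <;>
        simp [pow_two, Complex.add_re, Complex.add_im, Complex.mul_re, Complex.mul_im] <;>
        nlinarith [hs]
    · have : 0 < Real.sqrt (b - a * a / 4) := Real.sqrt_pos.mpr (by nlinarith)
      exact ne_of_gt this

/-- The Jacobian `M` of the two-mutant fast subsystem has an eigenvalue with
nonzero imaginary part iff `0 < w₂ < 4 q₁ (β*)²/(1 + β*)³`. -/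
theorem stmt_16 (q₁ q₂ βs w₂ : ℝ) (hq₁ : 0 < q₁) (hq₂ : 0 < q₂)
    (hβ : 0 < βs) (hw₂ : 0 < w₂)
    (w₁s x₁s x₂s : ℝ)
    (hw₁s : w₁s = w₂ / βs)
    (hx₁s : x₁s = q₁ / (1 + βs))
    (hx₂s : x₂s = q₂ * βs / (1 + βs))
    (M : Matrix (Fin 3) (Fin 3) ℝ)
    (hM : M = !![0, -w₁s, 0; q₁ - x₁s, -(w₁s + w₂), 0; -x₂s, 0, -(w₁s + w₂)]) :
    (∃ z : ℂ, (z • (1 : Matrix (Fin 3) (Fin 3) ℂ) - M.map Complex.ofReal).det = 0 ∧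
        z.im ≠ 0) ↔
      (0 < w₂ ∧ w₂ < 4 * q₁ * βs ^ 2 / (1 + βs) ^ 3) := by
  subst hM
  set a : ℝ := w₁s + w₂ with ha
  set b : ℝ := w₁s * (q₁ - x₁s) with hb
  have hdet : ∀ z : ℂ,
      (z • (1 : Matrix (Fin 3) (Fin 3) ℂ) -
        (!![0, -w₁s, 0; q₁ - x₁s, -(w₁s + w₂), 0; -x₂s, 0, -(w₁s + w₂)]).map Complex.ofReal).det
      = (z + (a : ℂ)) * (z ^ 2 + (a : ℂ) * z + (b : ℂ)) := by
    intro z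
    simp [ha, hb, Matrix.det_fin_three, Matrix.smul_apply, Matrix.one_apply, Matrix.map_apply,
      Matrix.sub_apply, Complex.ofReal_sub, Complex.ofReal_add, Complex.ofReal_neg,
      Complex.ofReal_mul]
    ring
  have step1 : (∃ z : ℂ, (z • (1 : Matrix (Fin 3) (Fin 3) ℂ) -
        (!![0, -w₁s, 0; q₁ - x₁s, -(w₁s + w₂), 0; -x₂s, 0, -(w₁s + w₂)]).map Complex.ofReal).det = 0 ∧
        z.im ≠ 0) ↔ (∃ z : ℂ, z ^ 2 + (a : ℂ) * z + (b : ℂ) = 0 ∧ z.im ≠ 0) := by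
    constructor
    · rintro ⟨z, hz, him⟩
      rw [hdet z] at hz
      rcases mul_eq_zero.mp hz with h | h
      · exfalso
        have : z = -(a : ℂ) := by linear_combination h
        apply him
        rw [this]
        simp
      · exact ⟨z, h, him⟩
    · rintro ⟨z, hz, him⟩
      exact ⟨z, by rw [hdet z, hz, mul_zero], him⟩
  rw [step1, quad_root_iff]
  have h1βs : (0:ℝ) < 1 + βs := by linarith
  have hA : a ^ 2 = w₂ ^ 2 * (1 + βs) ^ 2 / βs ^ 2 := by
    rw [ha, hw₁s]; field_simp
  have hB : 4 * b = 4 * w₂ * q₁ / (1 + βs) := by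
    rw [hb, hw₁s, hx₁s]; field_simp; ring
  rw [hA, hB, div_lt_div_iff₀ (by positivity) h1βs]
  constructor
  · intro h
    refine ⟨hw₂, ?_⟩
    rw [lt_div_iff₀ (by positivity)]
    nlinarith
  · rintro ⟨-, h⟩
    rw [lt_div_iff₀ (by positivity)] at h
    nlinarith
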